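/- arXiv:1201.2323 — 3 statements merged into one kernel-verified Lean document; each statement's English description precedes it below -/
import Mathlib

section
/- Let s ≥ 1 and u ∈ [0,1]. Then f_{u,s}(x) > 0 for every x ∈ (0,1) if and only if 3·s·u ≤ 1. -/
noncomputable def A (a b : ℝ) : ℝ := (a + b) / 2

noncomputable def G (a b : ℝ) : ℝ := Real.sqrt (a * b)

noncomputable def H (a b : ℝ) : ℝ := 2 * a * b / (a + b)

noncomputable def I (a b : ℝ) : ℝ :=
  (1 / Real.exp 1) * (a ^ a / b ^ b) ^ (1 / (a - b))

noncomputable def Q (t s a b : ℝ) : ℝ :=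
  G (t * a + (1 - t) * b) (t * b + (1 - t) * a) ^ s * A a b ^ (1 - s)

noncomputable def f (u s x : ℝ) : ℝ :=
  1 - (1 / (2 * x)) * Real.log ((1 + x) / (1 - x))
    - (1 / 2) * Real.log (1 - x ^ 2) + (s / 2) * Real.log (1 - u * x ^ 2)

noncomputable def h (u s x : ℝ) : ℝ :=
  -x + (1 / 2) * Real.log ((1 + x) / (1 - x)) - s * u * x ^ 3 / (1 - u * x ^ 2)

/-! For `3su ≤ 1`, Bernoulli's inequality `(1 - u x²)^s ≥ 1 - s u x² ≥ 1 - x²/3` gives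
`f u s x ≥ f (1/3) 1 x`, and the power series of `f (1/3) 1` in `x²` has vanishing first
coefficient and nonnegative later ones (because `3^(n+1) ≥ 2n + 3`), the `x⁴` one positive.
For `3su > 1`, the bounds `log((1+x)/(1-x)) ≥ 2x + 2x³/3`, `-log(1-y) ≤ y/(1-y)` and
`log(1-y) ≤ -y` give `f u s x ≤ (x²/2)(1/(1-x²) - 2/3 - su)`, which vanishes at
`x² = (3su-1)/(3su+2)`. -/

open Real Set

lemma two_mul_add_le_log_sub_log {x : ℝ} (hx0 : 0 ≤ x) (hx1 : x < 1) :
    2 * x + 2 * x ^ 3 / 3 ≤ log (1 + x) - log (1 - x) := by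
  have hsum := hasSum_log_sub_log_of_abs_lt_one (abs_lt.2 ⟨by linarith, hx1⟩)
  have := sum_le_hasSum (Finset.range 2) (fun k _ => by positivity) hsum
  norm_num [Finset.sum_range_succ] at this
  linarith

lemma log_one_sub_mul_le_mul_log {s t : ℝ} (hs : 1 ≤ s) (ht : t < 1) (hst : s * t < 1) :
    log (1 - s * t) ≤ s * log (1 - t) := by
  rw [← log_rpow (by linarith)]
  apply log_le_log (by linarith)
  simpa [sub_eq_add_neg] using one_add_mul_self_le_rpow_one_add (s := -t) (by linarith) hs

lemma f_le_half_sq_mul {u s x : ℝ} (hs : 0 ≤ s) (hx0 : 0 < x) (hx1 : x < 1) (hux : u * x ^ 2 < 1) :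
    f u s x ≤ x ^ 2 / 2 * (1 / (1 - x ^ 2) - 2 / 3 - s * u) := by
  have hx2 : 0 < 1 - x ^ 2 := by nlinarith
  have hL : 1 + x ^ 2 / 3 ≤ 1 / (2 * x) * log ((1 + x) / (1 - x)) := by
    rw [log_div (by linarith) (by linarith), one_div_mul_eq_div, le_div_iff₀ (by positivity)]
    linarith [two_mul_add_le_log_sub_log hx0.le hx1]
  have hB : 1 - (1 - x ^ 2)⁻¹ ≤ log (1 - x ^ 2) := one_sub_inv_le_log_of_pos hx2
  have hC : s * log (1 - u * x ^ 2) ≤ s * (-(u * x ^ 2)) :=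
    mul_le_mul_of_nonneg_left (by linarith [log_le_sub_one_of_pos (sub_pos.2 hux)]) hs
  have : x ^ 2 / 2 * (1 / (1 - x ^ 2) - 2 / 3 - s * u)
      = (1 - x ^ 2)⁻¹ / 2 - 1 / 2 - x ^ 2 / 3 + s * (-(u * x ^ 2)) / 2 := by
    field_simp; ring
  rw [this]
  unfold f
  linarith

lemma exists_f_nonpos {u s : ℝ} (hs : 0 ≤ s) (hu : u ≤ 1) (hsu : 1 < 3 * s * u) :
    ∃ x ∈ Ioo (0 : ℝ) 1, f u s x ≤ 0 := by
  set y := (3 * s * u - 1) / (3 * s * u + 2) with hy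
  have hy0 : 0 < y := div_pos (by linarith) (by linarith)
  have hy1 : y < 1 := (div_lt_one (by linarith)).2 (by linarith)
  have hxy : √y ^ 2 = y := sq_sqrt hy0.le
  have hx0 : 0 < √y := sqrt_pos.2 hy0
  have hx1 : √y < 1 := (sqrt_lt' one_pos).2 (by simpa using hy1)
  refine ⟨√y, ⟨hx0, hx1⟩, ?_⟩
  have hbracket : 1 / (1 - y) - 2 / 3 - s * u = 0 := by
    rw [hy]; field_simp; ring
  calc f u s √y ≤ _ := f_le_half_sq_mul hs hx0 hx1 (by rw [hxy]; nlinarith)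
    _ = 0 := by rw [hxy, hbracket, mul_zero]

noncomputable def fOneThirdCoeff (n : ℕ) : ℝ :=
  (1 - (1 / 3) ^ (n + 1)) / (2 * (n + 1)) - 1 / (2 * n + 3)

lemma fOneThirdCoeff_nonneg (n : ℕ) : 0 ≤ fOneThirdCoeff n := by
  have hpow : (2 * n + 3 : ℝ) ≤ 3 ^ (n + 1) := by
    have := one_add_mul_le_pow (a := (2 : ℝ)) (by norm_num) (n + 1)
    norm_num at this
    linarith
  have : (1 / 3 : ℝ) ^ (n + 1) ≤ 1 / (2 * n + 3) := by
    rw [one_div_pow]; exact one_div_le_one_div_of_le (by positivity) hpow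
  rw [le_div_iff₀ (by positivity)] at this
  rw [fOneThirdCoeff, sub_nonneg, div_le_div_iff₀ (by positivity) (by positivity)]
  linarith

lemma hasSum_f_one_third_one {x : ℝ} (hx0 : 0 < x) (hx1 : x < 1) :
    HasSum (fun n : ℕ => x ^ (2 * (n + 1)) * fOneThirdCoeff n) (f (1 / 3) 1 x) := by
  have hx2 : x ^ 2 < 1 := by nlinarith
  have hL := (hasSum_nat_add_iff' 1).2
    ((hasSum_log_sub_log_of_abs_lt_one (abs_lt.2 ⟨by linarith, hx1⟩)).div_const (2 * x))
  have h2 := (hasSum_pow_div_log_of_abs_lt_one (x := x ^ 2)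
    (by rw [abs_of_nonneg (by positivity)]; exact hx2)).div_const 2
  have h3 := (hasSum_pow_div_log_of_abs_lt_one (x := 1 / 3 * x ^ 2)
    (by rw [abs_of_nonneg (by positivity)]; linarith)).div_const 2
  convert ((h2.sub h3).sub hL).congr_fun fun n => ?_ using 1
  · rfl
  · unfold f
    rw [log_div (by linarith) (by linarith)]
    simp only [Finset.sum_range_one, CharP.cast_eq_zero, mul_zero, zero_add, div_one, mul_one,
      pow_one]
    field_simp
    ring
  · simp only [fOneThirdCoeff]
    push_cast
    field_simp
    ring

lemma f_one_third_one_pos {x : ℝ} (hx0 : 0 < x) (hx1 : x < 1) : 0 < f (1 / 3) 1 x :=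
  hasSum_lt (f := 0) (i := 1) (fun n => mul_nonneg (by positivity) (fOneThirdCoeff_nonneg n))
    (mul_pos (by positivity) (by norm_num [fOneThirdCoeff])) hasSum_zero
    (hasSum_f_one_third_one hx0 hx1)

lemma f_one_third_one_le {u s x : ℝ} (hs : 1 ≤ s) (hsu : 3 * s * u ≤ 1) (hx : x ^ 2 < 1) :
    f (1 / 3) 1 x ≤ f u s x := by
  have hu : u * x ^ 2 < 1 := by nlinarith
  have : log (1 - 1 / 3 * x ^ 2) ≤ s * log (1 - u * x ^ 2) :=
    (log_le_log (by linarith) (by nlinarith)).trans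
      (log_one_sub_mul_le_mul_log hs hu (by nlinarith))
  simp only [f]
  linarith

theorem stmt_2 (s u : ℝ) (hs : 1 ≤ s) (hu : u ∈ Set.Icc (0:ℝ) 1) :
    (∀ x ∈ Set.Ioo (0:ℝ) 1, 0 < f u s x) ↔ 3 * s * u ≤ 1 := by
  constructor
  · intro hf
    by_contra! hsu
    obtain ⟨x, hx, hfx⟩ := exists_f_nonpos (by linarith) hu.2 hsu
    exact (hf x hx).not_ge hfx
  · intro hsu x ⟨hx0, hx1⟩
    exact (f_one_third_one_pos hx0 hx1).trans_le (f_one_third_one_le hs hsu (by nlinarith))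
end

section
/- Let s ≥ 1 and u ∈ [0,1]. Then f_{u,s}(x) < 0 for every x ∈ (0,1) if and only if u + (2/e)^(2/s) ≥ 1. -/
open Real Set Filter Topology

lemma div_pow_lt_div_pow_of_hasSum {c : ℕ → ℝ} {n : ℕ → ℕ} {p : ℕ}
    (hneg : ∀ k, n k < p → c k ≤ 0) (hpos : ∀ k, p ≤ n k → 0 ≤ c k)
    {i : ℕ} (hi : n i < p) (hci : c i < 0) {x y a b : ℝ} (hx : 0 < x) (hxy : x < y)
    (ha : HasSum (fun k => c k * x ^ n k) a) (hb : HasSum (fun k => c k * y ^ n k) b) :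
    a / x ^ p < b / y ^ p := by
  have hy : 0 < y := hx.trans hxy
  have hlow {z : ℝ} (hz : 0 < z) {k : ℕ} (hk : n k ≤ p) :
      c k * z ^ n k / z ^ p = c k * (z ^ (p - n k))⁻¹ := by
    rw [pow_sub₀ z hz.ne' hk]
    field_simp
  have hhigh {z : ℝ} (hz : 0 < z) {k : ℕ} (hk : p ≤ n k) :
      c k * z ^ n k / z ^ p = c k * z ^ (n k - p) := by
    rw [pow_sub₀ z hz.ne' hk]
    field_simp
  have hinv {m : ℕ} (hm : m ≠ 0) : (y ^ m)⁻¹ < (x ^ m)⁻¹ :=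
    (inv_lt_inv₀ (pow_pos hy m) (pow_pos hx m)).mpr (pow_lt_pow_left₀ hxy hx.le hm)
  have hterm (k : ℕ) : c k * x ^ n k / x ^ p ≤ c k * y ^ n k / y ^ p := by
    rcases lt_or_ge (n k) p with hk | hk
    · rw [hlow hx hk.le, hlow hy hk.le]
      exact mul_le_mul_of_nonpos_left (hinv (by omega)).le (hneg k hk)
    · rw [hhigh hx hk, hhigh hy hk]
      exact mul_le_mul_of_nonneg_left (pow_le_pow_left₀ hx.le hxy.le _) (hpos k hk)
  have hstrict : c i * x ^ n i / x ^ p < c i * y ^ n i / y ^ p := by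
    rw [hlow hx hi.le, hlow hy hi.le]
    exact mul_lt_mul_of_neg_left (hinv (by omega)) hci
  exact hasSum_lt hterm hstrict (ha.div_const _) (hb.div_const _)

lemma min_le_of_antitone_increment_sign {D g : ℕ → ℝ} (hg : Antitone g)
    (hup : ∀ k, 0 ≤ g k → D k ≤ D (k + 1)) (hdown : ∀ k, g k ≤ 0 → D (k + 1) ≤ D k)
    {i j : ℕ} (hij : i ≤ j) : min (D 0) (D j) ≤ D i := by
  cases i with
  | zero => exact min_le_left _ _
  | succ i =>
    rcases le_total 0 (g i) with hgi | hgi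
    · have hmono (m : ℕ) (hm : m ≤ i + 1) : D 0 ≤ D m := by
        induction m with
        | zero => rfl
        | succ m ih => exact (ih (by omega)).trans (hup m (hgi.trans (hg (by omega))))
      exact min_le_of_left_le (hmono (i + 1) le_rfl)
    · exact min_le_of_right_le <| Nat.rel_of_forall_rel_succ_of_le_of_le (· ≥ ·)
        (fun k hk => hdown k ((hg hk).trans hgi)) (Nat.le_succ i) hij

lemma StrictAntiOn.lt_of_tendsto_nhdsGT {g : ℝ → ℝ} {a b L : ℝ} (hab : a < b)
    (hg : StrictAntiOn g (Ioc a b)) (hL : Tendsto g (𝓝[>] a) (𝓝 L)) : g b < L := by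
  obtain ⟨c, hac, hcb⟩ := exists_between hab
  have hcL : g c ≤ L := ge_of_tendsto hL <| by
    filter_upwards [Ioo_mem_nhdsGT hac] with z hz
    exact (hg ⟨hz.1, (hz.2.trans hcb).le⟩ ⟨hac, hcb.le⟩ hz.2).le
  exact (hg ⟨hac, hcb.le⟩ ⟨hab, le_rfl⟩ hcb).trans_le hcL

lemma StrictMonoOn.lt_of_tendsto_nhdsLT {g : ℝ → ℝ} {a b L : ℝ} (hab : a < b)
    (hg : StrictMonoOn g (Ico a b)) (hL : Tendsto g (𝓝[<] b) (𝓝 L)) : g a < L := by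
  obtain ⟨c, hac, hcb⟩ := exists_between hab
  have hcL : g c ≤ L := ge_of_tendsto hL <| by
    filter_upwards [Ioo_mem_nhdsLT hcb] with z hz
    exact (hg ⟨hac.le, hcb⟩ ⟨(hac.trans hz.1).le, hz.2⟩ hz.1).le
  exact (hg ⟨le_rfl, hab⟩ ⟨hac.le, hcb⟩ hac).trans_le hcL

lemma two_div_exp_one_rpow (t : ℝ) : (2 / exp 1) ^ t = exp (t * (log 2 - 1)) := by
  rw [rpow_def_of_pos (by positivity), log_div two_ne_zero (exp_ne_zero 1), log_exp, mul_comm]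

lemma one_le_add_two_div_exp_one_rpow_iff {s u : ℝ} (hs : 0 < s) (hu : u < 1) :
    1 ≤ u + (2 / exp 1) ^ (2 / s) ↔ 1 - log 2 + s / 2 * log (1 - u) ≤ 0 := by
  rw [two_div_exp_one_rpow, ← sub_le_iff_le_add', ← log_le_iff_le_exp (by linarith),
    ← mul_le_mul_iff_of_pos_left (by positivity : 0 < s / 2),
    show s / 2 * (2 / s * (log 2 - 1)) = log 2 - 1 by field_simp]
  constructor <;> intro <;> linarith

lemma one_third_lt_mul {s u : ℝ} (hs : 1 ≤ s) (hcond : 1 ≤ u + (2 / exp 1) ^ (2 / s)) :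
    1 / 3 < s * u := by
  set c := 1 - log 2
  have hc : 1 / 4 < c := by linarith [log_two_lt_d9]
  set T := 2 / s * c
  have hT : 0 < T := by positivity
  have hsT : s * T = 2 * c := by simp only [T]; field_simp
  have hT2c : T ≤ 2 * c := by nlinarith
  have hexp : exp (-T) ≤ 1 / (1 + T) := by
    rw [exp_neg, one_div]
    exact inv_anti₀ (by positivity) (by linarith [add_one_le_exp T])
  have hu : T / (1 + T) ≤ u := by
    rw [two_div_exp_one_rpow, show 2 / s * (log 2 - 1) = -T by ring] at hcond
    have : T / (1 + T) = 1 - 1 / (1 + T) := by field_simp; ring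
    linarith
  calc 1 / 3 < 2 * c / (1 + 2 * c) := by rw [lt_div_iff₀ (by positivity)]; linarith
    _ ≤ 2 * c / (1 + T) := div_le_div_of_nonneg_left (by positivity) (by positivity) (by linarith)
    _ = s * (T / (1 + T)) := by rw [← hsT]; ring
    _ ≤ s * u := mul_le_mul_of_nonneg_left hu (by positivity)

noncomputable def hCoeff (u s : ℝ) (k : ℕ) : ℝ := 1 / (2 * k + 3) - s * u ^ (k + 1)

lemma hasSum_h {u s x : ℝ} (hu : |u| ≤ 1) (hx : |x| < 1) :
    HasSum (fun k : ℕ => hCoeff u s k * x ^ (2 * k + 3)) (h u s x) := by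
  obtain ⟨hx₁, hx₂⟩ := abs_lt.mp hx
  have hux : |u * x ^ 2| < 1 := by
    rw [abs_mul, abs_pow]
    nlinarith [abs_nonneg x, abs_nonneg u]
  have hatanh : HasSum (fun k : ℕ => x ^ (2 * k + 3) / (2 * k + 3))
      ((1 / 2) * log ((1 + x) / (1 - x)) - x) := by
    rw [log_div (by linarith) (by linarith), one_div_mul_eq_div]
    have := (hasSum_nat_add_iff' 1).mpr ((hasSum_log_sub_log_of_abs_lt_one hx).div_const 2)
    norm_num at this
    exact this.congr_fun fun k => by field_simp; ring
  have hgeom : HasSum (fun k : ℕ => s * u ^ (k + 1) * x ^ (2 * k + 3))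
      (s * u * x ^ 3 / (1 - u * x ^ 2)) := by
    rw [div_eq_mul_inv]
    exact ((hasSum_geometric_of_abs_lt_one hux).mul_left (s * u * x ^ 3)).congr_fun fun k => by
      rw [mul_pow, ← pow_mul]
      ring
  rw [show h u s x = (1 / 2) * log ((1 + x) / (1 - x)) - x - s * u * x ^ 3 / (1 - u * x ^ 2) by
    rw [h]; ring]
  exact (hatanh.sub hgeom).congr_fun fun k => by rw [hCoeff]; ring

lemma hCoeff_one_neg {s : ℝ} (hs : 1 / 3 < s) (k : ℕ) : hCoeff 1 s k < 0 := by
  have : 1 / (2 * (k : ℝ) + 3) ≤ 1 / 3 :=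
    one_div_le_one_div_of_le (by norm_num) (by linarith [k.cast_nonneg (α := ℝ)])
  simp only [hCoeff, one_pow, mul_one]
  linarith

lemma hCoeff_neg_of_le {u s : ℝ} (hu0 : 0 ≤ u) (hu1 : u ≤ 1) (h0 : hCoeff u s 0 < 0)
    {i j : ℕ} (hij : i ≤ j) (hj : hCoeff u s j < 0) : hCoeff u s i < 0 := by
  set D : ℕ → ℝ := fun k => s * u ^ (k + 1) * (2 * k + 3)
  set g : ℕ → ℝ := fun k => u * (2 * k + 5) - (2 * k + 3)
  have hD (k : ℕ) : hCoeff u s k < 0 ↔ 1 < D k := by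
    rw [hCoeff, sub_neg, div_lt_iff₀ (by positivity)]
  have hsu : 0 ≤ s * u := by
    have := h0
    norm_num [hCoeff] at this
    linarith
  have hincr (k : ℕ) : D (k + 1) - D k = s * u * u ^ k * g k := by
    simp only [D, g]
    push_cast
    ring
  have hweight (k : ℕ) : 0 ≤ s * u * u ^ k := mul_nonneg hsu (pow_nonneg hu0 k)
  have hg : Antitone g := fun a b hab => by
    have : (a : ℝ) ≤ b := Nat.cast_le.mpr hab
    simp only [g]
    nlinarith
  rw [hD] at h0 hj ⊢
  refine (lt_min h0 hj).trans_le (min_le_of_antitone_increment_sign hg (fun k hk => ?_)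
    (fun k hk => ?_) hij)
  · linarith [hincr k, mul_nonneg (hweight k) hk]
  · linarith [hincr k, mul_nonpos_of_nonneg_of_nonpos (hweight k) hk]

lemma h_neg_of_hCoeff_neg {u s x : ℝ} (hu : |u| ≤ 1) (hc : ∀ k, hCoeff u s k < 0)
    (hx0 : 0 < x) (hx1 : x < 1) : h u s x < 0 :=
  hasSum_lt (f := fun k => hCoeff u s k * x ^ (2 * k + 3)) (g := 0) (i := 0)
    (fun k => (mul_neg_of_neg_of_pos (hc k) (by positivity)).le)
    (mul_neg_of_neg_of_pos (hc 0) (by positivity))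
    (hasSum_h hu (abs_lt.mpr ⟨by linarith, hx1⟩)) hasSum_zero

lemma h_pos_of_nonneg {u s : ℝ} (hu0 : 0 ≤ u) (hu1 : u ≤ 1) (hsu : 1 / 3 < s * u)
    {z w : ℝ} (hz : 0 < z) (hzw : z < w) (hw : w < 1) (hhz : 0 ≤ h u s z) : 0 < h u s w := by
  have habs : |u| ≤ 1 := abs_le.mpr ⟨by linarith, hu1⟩
  have h0 : hCoeff u s 0 < 0 := by
    norm_num [hCoeff]
    linarith
  have hexists : ∃ k, 0 ≤ hCoeff u s k := by
    by_contra! hall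
    exact hhz.not_gt (h_neg_of_hCoeff_neg habs hall hz (hzw.trans hw))
  obtain ⟨N, hN, hbelow⟩ : ∃ N, 0 ≤ hCoeff u s N ∧ ∀ k < N, hCoeff u s k < 0 :=
    ⟨Nat.find hexists, Nat.find_spec hexists, fun k hk => not_le.mp (Nat.find_min hexists hk)⟩
  have hN0 : N ≠ 0 := by
    rintro rfl
    exact hN.not_gt h0
  have hratio := div_pow_lt_div_pow_of_hasSum (n := fun k => 2 * k + 3) (p := 2 * N + 3)
    (fun k hk => (hbelow k (by omega)).le)
    (fun k hk => not_lt.mp fun hk' => hN.not_gt (hCoeff_neg_of_le hu0 hu1 h0 (by omega) hk'))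
    (by omega : 2 * 0 + 3 < 2 * N + 3) h0 hz hzw
    (hasSum_h habs (abs_lt.mpr ⟨by linarith, hzw.trans hw⟩))
    (hasSum_h habs (abs_lt.mpr ⟨by linarith, hw⟩))
  have hw0 : 0 < w := hz.trans hzw
  exact (div_pos_iff_of_pos_right (by positivity)).mp
    ((div_nonneg hhz (by positivity)).trans_lt hratio)

lemma hasDerivAt_f {u s x : ℝ} (hu : u ≤ 1) (hx0 : x ≠ 0) (hx : |x| < 1) :
    HasDerivAt (f u s) (h u s x / x ^ 2) x := by
  obtain ⟨hx₁, hx₂⟩ := abs_lt.mp hx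
  have h1 : 1 - x ≠ 0 := by linarith
  have h2 : 1 + x ≠ 0 := by linarith
  have hx2 : 0 < 1 - x ^ 2 := by nlinarith
  have hux2 : 0 < 1 - u * x ^ 2 := by nlinarith [sq_nonneg x]
  have hinv : HasDerivAt (fun y : ℝ => 1 / (2 * y)) (-1 / (2 * x ^ 2)) x :=
    ((hasDerivAt_const x 1).div ((hasDerivAt_id x).const_mul 2) (by simpa using hx0)).congr_deriv
      (by simp only [id]; field_simp; ring)
  have hratio : HasDerivAt (fun y : ℝ => (1 + y) / (1 - y)) (2 / (1 - x) ^ 2) x :=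
    (((hasDerivAt_id x).const_add 1).div ((hasDerivAt_id x).const_sub 1) h1).congr_deriv
      (by simp only [id]; field_simp; ring)
  have hatanh := hinv.mul (hratio.log (div_ne_zero h2 h1))
  have hsq := ((hasDerivAt_pow 2 x).const_sub 1).log hx2.ne'
  have husq := (((hasDerivAt_pow 2 x).const_mul u).const_sub 1).log hux2.ne'
  refine (((hatanh.const_sub 1).sub (hsq.const_mul (1 / 2))).add
    (husq.const_mul (s / 2))).congr_deriv ?_
  simp only [h]
  field_simp
  ring

lemma tendsto_f_nhdsNE_zero (u s : ℝ) : Tendsto (f u s) (𝓝[≠] 0) (𝓝 0) := by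
  have hL : HasDerivAt (fun y : ℝ => log ((1 + y) / (1 - y))) 2 0 :=
    ((((hasDerivAt_id (0 : ℝ)).const_add 1).div ((hasDerivAt_id (0 : ℝ)).const_sub 1)
      (by norm_num)).log (by norm_num)).congr_deriv (by norm_num)
  have hslope :
      Tendsto (fun x : ℝ => 1 / (2 * x) * log ((1 + x) / (1 - x))) (𝓝[≠] 0) (𝓝 1) := by
    convert (hasDerivAt_iff_tendsto_slope.mp hL).div_const 2 using 1
    · funext x
      simp [slope_def_field]
      ring
    · norm_num
  have hcont (c : ℝ) : Tendsto (fun x : ℝ => log (1 - c * x ^ 2)) (𝓝[≠] 0) (𝓝 0) := by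
    have : ContinuousAt (fun x : ℝ => log (1 - c * x ^ 2)) 0 :=
      ContinuousAt.log (by fun_prop) (by norm_num)
    simpa using this.tendsto.mono_left nhdsWithin_le_nhds
  have := ((tendsto_const_nhds (x := (1 : ℝ))).sub hslope).sub ((hcont 1).const_mul (1 / 2))
    |>.add ((hcont u).const_mul (s / 2))
  norm_num at this
  exact this.congr fun x => by simp only [f]; ring

lemma tendsto_f_nhdsLT_one {u : ℝ} (s : ℝ) (hu : u < 1) :
    Tendsto (f u s) (𝓝[<] 1) (𝓝 (1 - log 2 + s / 2 * log (1 - u))) := by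
  -- `f` rewritten on `(0, 1)` so that its only term singular at `1` is `(1 - x) log (1 - x)`
  set F : ℝ → ℝ := fun x => 1 - (1 / (2 * x) + 1 / 2) * log (1 + x)
      + 1 / (2 * x) * ((1 - x) * log (1 - x)) + s / 2 * log (1 - u * x ^ 2)
  have hF : ContinuousAt F 1 := by
    have hlog : ContinuousAt (fun x : ℝ => (1 - x) * log (1 - x)) 1 :=
      (continuous_mul_log.comp (continuous_const.sub continuous_id)).continuousAt
    simp only [F]
    fun_prop (disch := (norm_num; try linarith))
  have hF1 : F 1 = 1 - log 2 + s / 2 * log (1 - u) := by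
    norm_num [F]
  rw [← hF1]
  refine (hF.tendsto.mono_left nhdsWithin_le_nhds).congr' ?_
  filter_upwards [Ioo_mem_nhdsLT one_pos] with x ⟨hx₀, hx₁⟩
  have h1 : 0 < 1 - x := by linarith
  have h2 : 0 < 1 + x := by linarith
  simp only [F, f]
  rw [log_div h2.ne' h1.ne', show 1 - x ^ 2 = (1 - x) * (1 + x) by ring, log_mul h1.ne' h2.ne']
  field_simp
  ring

lemma strictAntiOn_f {u s : ℝ} (hu : u ≤ 1) {S : Set ℝ} (hS : Convex ℝ S)
    (hS01 : S ⊆ Ioo 0 1) (hneg : ∀ z ∈ interior S, h u s z < 0) : StrictAntiOn (f u s) S := by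
  have hderiv {z : ℝ} (hz : z ∈ S) : HasDerivAt (f u s) (h u s z / z ^ 2) z :=
    hasDerivAt_f hu (hS01 hz).1.ne' (abs_lt.mpr ⟨by linarith [(hS01 hz).1], (hS01 hz).2⟩)
  refine strictAntiOn_of_deriv_neg hS (fun z hz => (hderiv hz).continuousAt.continuousWithinAt)
    fun z hz => ?_
  rw [(hderiv (interior_subset hz)).deriv]
  exact div_neg_of_neg_of_pos (hneg z hz) (pow_pos (hS01 (interior_subset hz)).1 2)

lemma strictMonoOn_f {u s : ℝ} (hu : u ≤ 1) {S : Set ℝ} (hS : Convex ℝ S)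
    (hS01 : S ⊆ Ioo 0 1) (hpos : ∀ z ∈ interior S, 0 < h u s z) : StrictMonoOn (f u s) S := by
  have hderiv {z : ℝ} (hz : z ∈ S) : HasDerivAt (f u s) (h u s z / z ^ 2) z :=
    hasDerivAt_f hu (hS01 hz).1.ne' (abs_lt.mpr ⟨by linarith [(hS01 hz).1], (hS01 hz).2⟩)
  refine strictMonoOn_of_deriv_pos hS (fun z hz => (hderiv hz).continuousAt.continuousWithinAt)
    fun z hz => ?_
  rw [(hderiv (interior_subset hz)).deriv]
  exact div_pos (hpos z hz) (pow_pos (hS01 (interior_subset hz)).1 2)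

lemma f_neg_of_h_neg {u s x : ℝ} (hu : u ≤ 1) (hx : x ∈ Ioo 0 1)
    (hneg : ∀ z ∈ Ioo 0 x, h u s z < 0) : f u s x < 0 :=
  (strictAntiOn_f hu (convex_Ioc 0 x) (fun z hz => ⟨hz.1, hz.2.trans_lt hx.2⟩)
      (fun z hz => hneg z (by rwa [interior_Ioc] at hz))).lt_of_tendsto_nhdsGT hx.1
    ((tendsto_f_nhdsNE_zero u s).mono_left (nhdsWithin_mono _ fun _ hz => ne_of_gt hz))

lemma f_neg_of_h_pos {u s x : ℝ} (hu : u < 1) (hlim : 1 - log 2 + s / 2 * log (1 - u) ≤ 0)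
    (hx : x ∈ Ioo 0 1) (hpos : ∀ z ∈ Ioo x 1, 0 < h u s z) : f u s x < 0 :=
  ((strictMonoOn_f hu.le (convex_Ico x 1) (fun z hz => ⟨hx.1.trans_le hz.1, hz.2⟩)
      (fun z hz => hpos z (by rwa [interior_Ico] at hz))).lt_of_tendsto_nhdsLT hx.2
    (tendsto_f_nhdsLT_one s hu)).trans_le hlim

theorem stmt_3 (s u : ℝ) (hs : 1 ≤ s) (hu : u ∈ Set.Icc (0:ℝ) 1) :
    (∀ x ∈ Set.Ioo (0:ℝ) 1, f u s x < 0) ↔ 1 ≤ u + (2 / Real.exp 1) ^ ((2:ℝ)/s) := by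
  obtain ⟨hu0, hu1⟩ := hu
  have hs0 : 0 < s := by linarith
  constructor
  · intro hf
    by_contra! hcond
    have hu1' : u < 1 := by
      linarith [rpow_pos_of_pos (by positivity : (0 : ℝ) < 2 / exp 1) (2 / s)]
    have hlim : 0 < 1 - log 2 + s / 2 * log (1 - u) :=
      not_le.mp ((one_le_add_two_div_exp_one_rpow_iff hs0 hu1').not.mp hcond.not_ge)
    obtain ⟨x, hfx, hx⟩ := (((tendsto_f_nhdsLT_one s hu1').eventually_const_lt hlim).and
      (Ioo_mem_nhdsLT one_pos)).exists
    exact (hf x hx).not_gt hfx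
  · intro hcond x hx
    rcases hu1.eq_or_lt with rfl | hu1
    · exact f_neg_of_h_neg le_rfl hx fun z hz =>
        h_neg_of_hCoeff_neg (by norm_num) (hCoeff_one_neg (by linarith)) hz.1 (hz.2.trans hx.2)
    by_cases hneg : ∀ z ∈ Ioo 0 x, h u s z < 0
    · exact f_neg_of_h_neg hu1.le hx hneg
    obtain ⟨z, hz, hhz⟩ : ∃ z ∈ Ioo 0 x, 0 ≤ h u s z := by
      simpa only [not_forall, not_lt, exists_prop] using hneg
    exact f_neg_of_h_pos hu1 ((one_le_add_two_div_exp_one_rpow_iff hs0 hu1).mp hcond) hx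
      fun w hw => h_pos_of_nonneg hu0 hu1.le (one_third_lt_mul hs hcond) hz.1
        (hz.2.trans hw.1) hw.2 hhz
end

section
/- Let a > b > 0, let s ≥ 1 be a real number, and let t ∈ [0, 1/2]. Then ln(Q_{t,s}(a,b) / I(a,b)) = f_{(1-2t)², s}((a-b)/(a+b)). -/
/-! With `x = (a - b)/(a + b)` one has `(1 + x)/(1 - x) = a/b` and `1 - x² = (G/A)²`. The points
`c = t a + (1 - t) b`, `d = t b + (1 - t) a` have the same arithmetic mean as `a, b` and
`(c - d)/(c + d) = (2t - 1) x`, so `1 - (1 - 2t)² x² = (G(c,d)/A)²`. Writing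
`Q = A · (G(c,d)/A)^s` and `ln I = ln G + (1/(2x)) ln(a/b) - 1`, the two sides agree term by term. -/

open Real

lemma A_pos {a b : ℝ} (hab : 0 < a + b) : 0 < A a b := by
  rw [A]; positivity

lemma G_nonneg (a b : ℝ) : 0 ≤ G a b :=
  sqrt_nonneg _

lemma G_pos {a b : ℝ} (ha : 0 < a) (hb : 0 < b) : 0 < G a b :=
  sqrt_pos.mpr (mul_pos ha hb)

lemma I_pos {a b : ℝ} (ha : 0 < a) (hb : 0 < b) : 0 < I a b := by
  rw [I]; positivity

lemma log_G {a b : ℝ} (ha : 0 < a) (hb : 0 < b) : log (G a b) = (log a + log b) / 2 := by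
  rw [G, log_sqrt (mul_pos ha hb).le, log_mul ha.ne' hb.ne']

lemma log_I {a b : ℝ} (ha : 0 < a) (hb : 0 < b) (hab : a ≠ b) :
    log (I a b) = log (G a b) + (a + b) / (2 * (a - b)) * log (a / b) - 1 := by
  have hpow : 0 < a ^ a / b ^ b := by positivity
  have hsub : a - b ≠ 0 := sub_ne_zero.mpr hab
  rw [I, log_mul (by positivity) (rpow_pos_of_pos hpow _).ne', one_div, log_inv, log_exp,
    log_rpow hpow, log_div (by positivity) (by positivity), log_rpow ha, log_rpow hb,
    log_G ha hb, log_div ha.ne' hb.ne']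
  field_simp
  ring

lemma Q_eq_A_mul_rpow (t s : ℝ) {a b : ℝ} (hab : 0 < a + b) :
    Q t s a b = A a b * (G (t * a + (1 - t) * b) (t * b + (1 - t) * a) / A a b) ^ s := by
  have hA := A_pos hab
  rw [Q, div_rpow (G_nonneg _ _) hA.le, rpow_sub hA, rpow_one]
  field_simp

lemma Q_pos {t a b : ℝ} (s : ℝ) (hab : 0 < a + b) (hc : 0 < t * a + (1 - t) * b)
    (hd : 0 < t * b + (1 - t) * a) : 0 < Q t s a b := by
  have hA := A_pos hab
  have hG := G_pos hc hd
  rw [Q_eq_A_mul_rpow t s hab]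
  positivity

lemma log_Q {t a b : ℝ} (s : ℝ) (hab : 0 < a + b) (hc : 0 < t * a + (1 - t) * b)
    (hd : 0 < t * b + (1 - t) * a) :
    log (Q t s a b) =
      log (A a b) + s * log (G (t * a + (1 - t) * b) (t * b + (1 - t) * a) / A a b) := by
  have hA := A_pos hab
  have hG := G_pos hc hd
  rw [Q_eq_A_mul_rpow t s hab, log_mul hA.ne' (by positivity), log_rpow (by positivity)]

-- `4cd = (c + d)² - (c - d)²`
lemma G_div_A_sq {c d : ℝ} (hcd : 0 ≤ c * d) (hc_add_d : c + d ≠ 0) :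
    (G c d / A c d) ^ 2 = 1 - ((c - d) / (c + d)) ^ 2 := by
  rw [div_pow, G, A, sq_sqrt hcd]
  field_simp
  ring

lemma one_add_div_one_sub_div {a b : ℝ} (hab : a + b ≠ 0) :
    (1 + (a - b) / (a + b)) / (1 - (a - b) / (a + b)) = a / b := by
  rw [one_add_div hab, one_sub_div hab, div_div_div_cancel_right₀ hab]
  ring_nf

theorem stmt_8_general (a b s t : ℝ) (hab : b < a) (hb : 0 < b)
    (ht : t ∈ Set.Icc (0:ℝ) (1/2)) :
    Real.log (Q t s a b / I a b) = f ((1 - 2*t)^2) s ((a - b)/(a + b)) := by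
  obtain ⟨ht0, ht1⟩ := ht
  have ha : 0 < a := hb.trans hab
  have hsum : 0 < a + b := by linarith
  set c := t * a + (1 - t) * b
  set d := t * b + (1 - t) * a
  have hc : 0 < c := by nlinarith
  have hd : 0 < d := by nlinarith
  set x := (a - b) / (a + b)
  have hx_inv : 1 / (2 * x) = (a + b) / (2 * (a - b)) := by
    simp only [x]; field_simp
  have hx_sq : 1 - x ^ 2 = (G a b / A a b) ^ 2 :=
    (G_div_A_sq (mul_pos ha hb).le hsum.ne').symm
  have hux_sq : 1 - (1 - 2 * t) ^ 2 * x ^ 2 = (G c d / A a b) ^ 2 := by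
    have hcd_add : c + d = a + b := by ring
    have hcd_sub : c - d = (2 * t - 1) * (a - b) := by ring
    have hA : A c d = A a b := by rw [A, A, hcd_add]
    rw [← hA, G_div_A_sq (mul_pos hc hd).le (by linarith), hcd_add, hcd_sub, mul_div_assoc,
      mul_pow]
    ring
  rw [log_div (Q_pos s hsum hc hd).ne' (I_pos ha hb).ne', log_Q s hsum hc hd, log_I ha hb hab.ne', f,
    one_add_div_one_sub_div hsum.ne', hx_inv, hx_sq, hux_sq, log_pow, log_pow,
    log_div (G_pos ha hb).ne' (A_pos hsum).ne']
  push_cast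
  ring

theorem stmt_8 (a b s t : ℝ) (hab : b < a) (hb : 0 < b) (hs : 1 ≤ s)
    (ht : t ∈ Set.Icc (0:ℝ) (1/2)) :
    Real.log (Q t s a b / I a b) = f ((1 - 2*t)^2) s ((a - b)/(a + b)) :=
  stmt_8_general a b s t hab hb ht
end
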